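/- Let p be a prime and let a, b, c, d ∈ ℤ with p² | a and p | b. Let R be the ℤ-algebra whose underlying ℤ-module is free with basis 1, ω, θ, with commutative multiplication determined by ω² = −ac − b·ω + a·θ, θ² = −bd − d·ω + c·θ, and ω·θ = θ·ω = −ad (this multiplication is associative, so R is a cubic ring). Then inside R ⊗_ℤ ℚ, the ℤ-submodule R' = ℤ·1 + ℤ·(ω/p) + ℤ·θ is a subring (closed under multiplication and containing 1), it contains R, and R has index p in R' (the quotient R'/R of abelian groups has order p). -/

import Mathlib

open scoped Classical

/-- Lemma 3.4: a cubic ring which is nonmaximal at `p` (witnessed by a form with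
`p² | a`, `p | b`) is contained with index `p` in the overring `R' = ℤ⟨1, ω/p, θ⟩`.
Here the cubic ring `R = ℤ·1 + ℤ·ω + ℤ·θ` is realized inside a commutative
`ℚ`-algebra `A` (playing the role of `R ⊗ ℚ`), with `1, ω, θ` linearly independent
and satisfying the multiplication table of the Delone–Faddeev correspondence. -/
theorem overring_of_index_p
    (p : ℕ) (hp : p.Prime) (a b c d : ℤ) (ha : (p : ℤ) ^ 2 ∣ a) (hb : (p : ℤ) ∣ b)
    (A : Type*) [CommRing A] [Algebra ℚ A] (ω θ : A)
    (hfree : LinearIndependent ℚ ![(1 : A), ω, θ])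
    (hω2 : ω ^ 2 = -((a : A) * (c : A)) - (b : A) * ω + (a : A) * θ)
    (hθ2 : θ ^ 2 = -((b : A) * (d : A)) - (d : A) * ω + (c : A) * θ)
    (hωθ : ω * θ = -((a : A) * (d : A))) :
    (1 : A) ∈ Submodule.span ℤ ({1, ((p : ℚ)⁻¹) • ω, θ} : Set A) ∧
    (∀ x ∈ Submodule.span ℤ ({1, ((p : ℚ)⁻¹) • ω, θ} : Set A),
      ∀ y ∈ Submodule.span ℤ ({1, ((p : ℚ)⁻¹) • ω, θ} : Set A),
        x * y ∈ Submodule.span ℤ ({1, ((p : ℚ)⁻¹) • ω, θ} : Set A)) ∧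
    Submodule.span ℤ ({1, ω, θ} : Set A)
      ≤ Submodule.span ℤ ({1, ((p : ℚ)⁻¹) • ω, θ} : Set A) ∧
    Nat.card
      ((Submodule.span ℤ ({1, ((p : ℚ)⁻¹) • ω, θ} : Set A)) ⧸
        (Submodule.comap (Submodule.span ℤ ({1, ((p : ℚ)⁻¹) • ω, θ} : Set A)).subtype
          (Submodule.span ℤ ({1, ω, θ} : Set A)))) = p := by
  obtain ⟨a', rfl⟩ := ha
  obtain ⟨b', rfl⟩ := hb
  have hp0 : ((p:ℚ)) ≠ 0 := Nat.cast_ne_zero.2 hp.pos.ne'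
  set ω' : A := ((p : ℚ)⁻¹) • ω with hω'def
  have hωz : ((p:ℕ):ℤ) • ω' = ω := by
    rw [← Int.cast_smul_eq_zsmul ℚ, hω'def, smul_smul]
    push_cast
    rw [mul_inv_cancel₀ hp0, one_smul]
  have hfree' : LinearIndependent ℚ ![(1:A), ω', θ] := by
    have h := hfree.units_smul ![1, Units.mk0 ((p:ℚ)⁻¹) (inv_ne_zero hp0), 1]
    have he : (![1, Units.mk0 ((p:ℚ)⁻¹) (inv_ne_zero hp0), 1] • ![(1:A), ω, θ])
        = ![(1:A), ω', θ] := by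
      funext i
      fin_cases i <;> simp [hω'def]
    rwa [he] at h
  rw [← hωz] at hω2 hθ2 hωθ ⊢
  clear_value ω'
  clear hfree hω'def
  -- injectivity of integer scaling
  have hinjz : ∀ (n:ℤ), n ≠ 0 → ∀ x y : A, n • x = n • y → x = y := by
    intro n hn x y h
    have hn' : ((n:ℚ)) ≠ 0 := Int.cast_ne_zero.2 hn
    have h' : ((n:ℚ)) • x = ((n:ℚ)) • y := by
      rw [Int.cast_smul_eq_zsmul, Int.cast_smul_eq_zsmul]; exact h
    have := congrArg (fun z => ((n:ℚ))⁻¹ • z) h'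
    simpa [smul_smul, inv_mul_cancel₀ hn'] using this
  have hpz : ((p:ℕ):ℤ) ≠ 0 := Int.natCast_ne_zero.2 hp.pos.ne'
  -- multiplication identities
  have e1 : ω' * ω' = (-(a'*c)) • (1:A) + (-b') • ω' + a' • θ := by
    apply hinjz (((p:ℕ):ℤ)^2) (pow_ne_zero _ hpz)
    rw [sq (((p:ℕ):ℤ)), ← smul_mul_smul_comm, ← sq, hω2]
    simp only [zsmul_eq_mul, smul_add]
    push_cast
    ring
  have e2 : ω' * θ = (-(((p:ℕ):ℤ)*a'*d)) • (1:A) := by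
    apply hinjz (((p:ℕ):ℤ)) hpz
    rw [← smul_mul_assoc, hωθ]
    simp only [zsmul_eq_mul]
    push_cast
    ring
  have e3 : θ * θ = (-(((p:ℕ):ℤ)*b'*d)) • (1:A) + (-(d*((p:ℕ):ℤ))) • ω' + c • θ := by
    rw [← sq, hθ2]
    simp only [zsmul_eq_mul, smul_add]
    push_cast
    ring
  -- set-to-range conversions
  have hset' : ({1, ω', θ} : Set A) = Set.range ![(1:A), ω', θ] := by
    simp [Set.ext_iff, Fin.exists_fin_succ]; tauto
  have hsetω : ({1, ((p:ℕ):ℤ) • ω', θ} : Set A) = Set.range ![(1:A), ((p:ℕ):ℤ) • ω', θ] := by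
    simp [Set.ext_iff, Fin.exists_fin_succ]; tauto
  set v : Fin 3 → A := ![(1:A), ω', θ] with hv
  set w : Fin 3 → A := ![(1:A), ((p:ℕ):ℤ) • ω', θ] with hw
  have hspanv : Submodule.span ℤ ({1, ω', θ} : Set A) = Submodule.span ℤ (Set.range v) :=
    congrArg _ hset'
  have hspanw : Submodule.span ℤ ({1, ((p:ℕ):ℤ) • ω', θ} : Set A)
      = Submodule.span ℤ (Set.range w) := congrArg _ hsetω
  set M : Submodule ℤ A := Submodule.span ℤ ({1, ω', θ} : Set A) with hM
  have mem1 : (1:A) ∈ M := Submodule.subset_span (by left; rfl)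
  have memω : ω' ∈ M := Submodule.subset_span (by right; left; rfl)
  have memθ : θ ∈ M := Submodule.subset_span (by right; right; rfl)
  have hmωω : ω' * ω' ∈ M := by
    rw [e1]
    exact add_mem (add_mem (Submodule.smul_mem _ _ mem1) (Submodule.smul_mem _ _ memω))
      (Submodule.smul_mem _ _ memθ)
  have hmωθ : ω' * θ ∈ M := by rw [e2]; exact Submodule.smul_mem _ _ mem1
  have hmθθ : θ * θ ∈ M := by
    rw [e3]
    exact add_mem (add_mem (Submodule.smul_mem _ _ mem1) (Submodule.smul_mem _ _ memω))
      (Submodule.smul_mem _ _ memθ)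
  have hMM : M * M ≤ M := by
    rw [hM, Submodule.span_mul_span]
    refine Submodule.span_le.2 ?_
    rintro z ⟨x, hx, y, hy, rfl⟩
    simp only [Set.mem_insert_iff, Set.mem_singleton_iff] at hx hy
    rcases hx with rfl | rfl | rfl <;> rcases hy with rfl | rfl | rfl <;>
      simp only [one_mul, mul_one] <;>
      first
        | exact mem1 | exact memω | exact memθ | exact hmωω | exact hmωθ | exact hmθθ
        | (rw [mul_comm]; exact hmωθ)
  refine ⟨mem1, fun x hx y hy => hMM (Submodule.mul_mem_mul hx hy), ?_, ?_⟩
  · refine Submodule.span_le.2 ?_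
    rintro x hx
    simp only [Set.mem_insert_iff, Set.mem_singleton_iff] at hx
    rcases hx with rfl | rfl | rfl
    · exact mem1
    · exact Submodule.smul_mem _ _ memω
    · exact memθ
  -- the index computation
  · rw [hspanv, hspanw]
    set MR : Submodule ℤ A := Submodule.span ℤ (Set.range v) with hMR
    have hindZ : LinearIndependent ℤ v := by
      refine hfree'.restrict_scalars ?_
      intro r s h
      have : ((r:ℚ)) = ((s:ℚ)) := by simpa [zsmul_eq_mul] using h
      exact_mod_cast this
    set B : Module.Basis (Fin 3) ℤ MR := Module.Basis.span hindZ with hB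
    set f : MR →ₗ[ℤ] ZMod p :=
      (Int.castAddHom (ZMod p)).toIntLinearMap.comp (B.coord 1) with hf
    have hfapp : ∀ x : MR, f x = ((B.repr x 1 : ℤ) : ZMod p) := fun x => rfl
    have hsurj : Function.Surjective f := by
      intro z
      obtain ⟨n, rfl⟩ := ZMod.intCast_surjective z
      refine ⟨n • B 1, ?_⟩
      rw [hfapp]
      simp [Module.Basis.repr_self]
    have hrep : ∀ x : MR, (x:A) = ∑ i, B.repr x i • v i := by
      intro x
      conv_lhs => rw [← B.sum_repr x]
      rw [hB]
      simp only [AddSubmonoidClass.coe_finset_sum, SetLike.val_smul]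
      exact Finset.sum_congr rfl fun i _ => by rw [Module.Basis.span_apply]
    have huniq : ∀ (cf ef : Fin 3 → ℤ), ∑ i, cf i • v i = ∑ i, ef i • v i →
        ∀ i, cf i = ef i := by
      intro cf ef h i
      have h0 : ∑ i, (cf - ef) i • v i = 0 := by
        simp only [Pi.sub_apply, sub_smul, Finset.sum_sub_distrib, h, sub_self]
      have := Fintype.linearIndependent_iff.1 hindZ (cf - ef) h0 i
      simpa [sub_eq_zero] using this
    have hker : ∀ x : MR, (f x = 0 ↔ (x:A) ∈ Submodule.span ℤ (Set.range w)) := by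
      intro x
      rw [hfapp, ZMod.intCast_zmod_eq_zero_iff_dvd]
      constructor
      · rintro ⟨k, hk⟩
        rw [Submodule.mem_span_range_iff_exists_fun]
        refine ⟨![B.repr x 0, k, B.repr x 2], ?_⟩
        rw [hrep x]
        simp only [hv, hw, Fin.sum_univ_three, Matrix.cons_val_zero, Matrix.cons_val_one,
          Matrix.head_cons, Matrix.cons_val_two, Matrix.tail_cons, smul_smul, hk]
        ring_nf
      · intro hx
        obtain ⟨cf, hc⟩ := (Submodule.mem_span_range_iff_exists_fun ℤ).1 hx
        have hc' : ∑ i, (![cf 0, cf 1 * ((p:ℕ):ℤ), cf 2]) i • v i = ∑ i, B.repr x i • v i := by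
          rw [← hrep x, ← hc]
          simp only [hv, hw, Fin.sum_univ_three, Matrix.cons_val_zero, Matrix.cons_val_one,
            Matrix.head_cons, Matrix.cons_val_two, Matrix.tail_cons, smul_smul]
        have := huniq _ _ hc' 1
        simp only [Matrix.cons_val_one, Matrix.head_cons, Matrix.cons_val_zero] at this
        exact ⟨cf 1, by rw [← this]; ring⟩
    have hNker : Submodule.comap MR.subtype (Submodule.span ℤ (Set.range w))
        = LinearMap.ker f := by
      ext x
      rw [Submodule.mem_comap, LinearMap.mem_ker, Submodule.subtype_apply]
      exact (hker x).symm
    rw [hNker]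
    have equiv := f.quotKerEquivOfSurjective hsurj
    rw [Nat.card_congr equiv.toEquiv, Nat.card_zmod]
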